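/- Let p ∈ (0,1), n ≥ 1, and let z ∈ ℂ with z ∉ {1−p, 1+p}. Then z is an eigenvalue of Δ^(n)_p if and only if R_{Δ_p}(z) is an eigenvalue of Δ^(n−1)_p. -/
import Mathlib


open MeasureTheory Filter Matrix Polynomial

noncomputable section

/-- `resid x` is the residue mod 3 of `x` after dividing out the largest power of 3. -/
def resid (x : ℕ) : ℕ := (x / 3 ^ (x.factorization 3)) % 3

/-- The transition probabilities `p(x,y)` of the self-similar `p`-Laplacian:
`p(0,1) = 1`; for `x ≥ 1`, `(p(x,x−1), p(x,x+1)) = (1−p, p)` if `3^{−m(x)} x ≡ 1 (mod 3)`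
and `(p, 1−p)` if `3^{−m(x)} x ≡ 2 (mod 3)`; `p(x,y) = 0` if `|x−y| ≠ 1`. -/
def hop (p : ℝ) (x y : ℕ) : ℝ :=
  if y = x + 1 then (if x = 0 then 1 else if resid x = 1 then p else 1 - p)
  else if x = y + 1 then (if resid x = 1 then 1 - p else p)
  else 0

/-- The self-similar Laplacian `Δ_p` acting on sequences `f : ℤ₊ → ℂ`. -/
def lap (p : ℝ) (f : ℕ → ℂ) : ℕ → ℂ := fun x =>
  if x = 0 then f 0 - f 1
  else f x - (hop p x (x - 1) : ℂ) * f (x - 1) - (hop p x (x + 1) : ℂ) * f (x + 1)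

/-- The self-similar almost Mathieu operator `H_{p,β,α,θ}` acting on sequences. -/
def ham (p β α θ : ℝ) (f : ℕ → ℂ) : ℕ → ℂ := fun x =>
  if x = 0 then ((β * Real.cos θ : ℝ) : ℂ) * f 0 - f 1
  else ((β * Real.cos (2 * Real.pi * α * (x : ℝ) + θ) : ℝ) : ℂ) * f x
      - (hop p x (x - 1) : ℂ) * f (x - 1) - (hop p x (x + 1) : ℂ) * f (x + 1)

/-- The level-`l` Laplacian `Δ^(l)_p` as a `(3^l+1) × (3^l+1)` matrix (complex entries). -/
def lapMatrix (p : ℝ) (l : ℕ) : Matrix (Fin (3 ^ l + 1)) (Fin (3 ^ l + 1)) ℂ :=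
  Matrix.of fun i j =>
    if (i : ℕ) = 0 then (if (j : ℕ) = 0 then 1 else if (j : ℕ) = 1 then -1 else 0)
    else if (i : ℕ) = 3 ^ l then
      (if (j : ℕ) = 3 ^ l then 1 else if (j : ℕ) + 1 = 3 ^ l then -1 else 0)
    else if (j : ℕ) = (i : ℕ) then 1
    else if (j : ℕ) + 1 = (i : ℕ) then -(hop p i (i - 1) : ℂ)
    else if (j : ℕ) = (i : ℕ) + 1 then -(hop p i (i + 1) : ℂ)
    else 0

/-- The level-`l` almost Mathieu operator `H^(l)_{p,β,α,θ}` as a `(3^l+1) × (3^l+1)` matrix. -/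
def hamMatrix (p β α θ : ℝ) (l : ℕ) : Matrix (Fin (3 ^ l + 1)) (Fin (3 ^ l + 1)) ℂ :=
  Matrix.of fun i j =>
    if (i : ℕ) = 0 then
      (if (j : ℕ) = 0 then ((β * Real.cos θ : ℝ) : ℂ) else if (j : ℕ) = 1 then -1 else 0)
    else if (i : ℕ) = 3 ^ l then
      (if (j : ℕ) = 3 ^ l then ((β * Real.cos (2 * Real.pi * α * ((3 ^ l : ℕ) : ℝ) + θ) : ℝ) : ℂ)
       else if (j : ℕ) + 1 = 3 ^ l then -1 else 0)
    else if (j : ℕ) = (i : ℕ) then ((β * Real.cos (2 * Real.pi * α * ((i : ℕ) : ℝ) + θ) : ℝ) : ℂ)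
    else if (j : ℕ) + 1 = (i : ℕ) then -(hop p i (i - 1) : ℂ)
    else if (j : ℕ) = (i : ℕ) + 1 then -(hop p i (i + 1) : ℂ)
    else 0

/-- The set of eigenvalues (in ℂ) of a complex square matrix. -/
def matSpec {n : ℕ} (M : Matrix (Fin n) (Fin n) ℂ) : Set ℂ :=
  {z | ∃ v : Fin n → ℂ, v ≠ 0 ∧ M.mulVec v = z • v}

/-- The spectral decimation function `R_{Δ_p}(z) = z(z+p−2)(z−p−1)/(p(1−p))`. -/
def Rlap (p : ℝ) (z : ℂ) : ℂ := z * (z + (p : ℂ) - 2) * (z - (p : ℂ) - 1) / ((p : ℂ) * (1 - (p : ℂ)))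

/-- The spectral decimation function `R_{p,β,k/3,0}` of the level-1 self-similar AMO. -/
def Ramo (p β : ℝ) (z : ℂ) : ℂ :=
  (-(β : ℂ) + 2 * (p : ℂ) - 2 * z) *
    ((β : ℂ) ^ 2 + 2 * (β : ℂ) * (p : ℂ) + (β : ℂ) * z - 2 * (p : ℂ) * z - 2 * (p : ℂ)
      - 2 * z ^ 2 + 2) / (4 * (p : ℂ) * (1 - (p : ℂ)))

/-- Real version of `Ramo`. -/
def RamoR (p β z : ℝ) : ℝ :=
  (-β + 2 * p - 2 * z) * (β ^ 2 + 2 * β * p + β * z - 2 * p * z - 2 * p - 2 * z ^ 2 + 2) /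
    (4 * p * (1 - p))

/-- The function `φ(z) = 4p(p−1)/(4p² − (β+2z)²)`. -/
def phiFun (p β : ℝ) (z : ℂ) : ℂ :=
  4 * (p : ℂ) * ((p : ℂ) - 1) / (4 * (p : ℂ) ^ 2 - ((β : ℂ) + 2 * z) ^ 2)

/-- The function `ψ(z) = −(β² + 2βp + βz − 2pz − 2p − 2z² + 2)/(β + 2p + 2z)`. -/
def psiFun (p β : ℝ) (z : ℂ) : ℂ :=
  -((β : ℂ) ^ 2 + 2 * (β : ℂ) * (p : ℂ) + (β : ℂ) * z - 2 * (p : ℂ) * z - 2 * (p : ℂ)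
      - 2 * z ^ 2 + 2) / ((β : ℂ) + 2 * (p : ℂ) + 2 * z)

/-- The weighted measure on `ℕ` associated with a weight `w`, giving `{x}` mass `w x`. -/
def wMeasure (w : ℕ → ℝ) : Measure ℕ :=
  Measure.sum fun x => (ENNReal.ofReal (w x)) • Measure.dirac x

/-- Membership in the weighted `ℓ²`-space `ℓ²(ℤ₊, dπ)`. -/
def MemL2 (w : ℕ → ℝ) (f : ℕ → ℂ) : Prop := Summable fun x => ‖f x‖ ^ 2 * w x

set_option linter.unusedSectionVars false

namespace SDProof

lemma pow3_pos (l : ℕ) : 1 ≤ 3 ^ l := Nat.one_le_pow _ _ (by norm_num)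

lemma resid_eq_mod (x : ℕ) (h : x % 3 ≠ 0) : resid x = x % 3 := by
  have h3 : x.factorization 3 = 0 := by
    rw [Nat.factorization_eq_zero_iff]
    right; left
    intro hd; omega
  simp [resid, h3]

lemma resid_mul3 (k : ℕ) (hk : k ≠ 0) : resid (3 * k) = resid k := by
  have h3 : Nat.Prime 3 := by norm_num
  have hf : (3 * k).factorization 3 = k.factorization 3 + 1 := by
    rw [Nat.factorization_mul (by norm_num) hk]
    simp [h3.factorization]
    ring
  rw [resid, resid, hf, pow_succ, mul_comm (3 ^ k.factorization 3) 3,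
    Nat.mul_div_mul_left _ _ (by norm_num : 0 < 3)]

lemma hop_left_mod1 (p : ℝ) (x : ℕ) (h : x % 3 = 1) : hop p x (x - 1) = 1 - p := by
  rw [hop, if_neg (by omega : ¬(x - 1 = x + 1)), if_pos (by omega : x = x - 1 + 1),
    if_pos (by rw [resid_eq_mod x (by omega), h])]

lemma hop_right_mod1 (p : ℝ) (x : ℕ) (h : x % 3 = 1) : hop p x (x + 1) = p := by
  rw [hop, if_pos rfl, if_neg (by omega : ¬x = 0),
    if_pos (by rw [resid_eq_mod x (by omega), h])]

lemma hop_left_mod2 (p : ℝ) (x : ℕ) (h : x % 3 = 2) : hop p x (x - 1) = p := by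
  rw [hop, if_neg (by omega : ¬(x - 1 = x + 1)), if_pos (by omega : x = x - 1 + 1),
    if_neg (by rw [resid_eq_mod x (by omega), h]; norm_num)]

lemma hop_right_mod2 (p : ℝ) (x : ℕ) (h : x % 3 = 2) : hop p x (x + 1) = 1 - p := by
  rw [hop, if_pos rfl, if_neg (by omega : ¬x = 0),
    if_neg (by rw [resid_eq_mod x (by omega), h]; norm_num)]

lemma hop_left_mul3 (p : ℝ) (k : ℕ) (hk : k ≠ 0) :
    hop p (3 * k) (3 * k - 1) = hop p k (k - 1) := by
  rw [hop, hop, if_neg (by omega : ¬(3 * k - 1 = 3 * k + 1)),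
    if_neg (by omega : ¬(k - 1 = k + 1)), if_pos (by omega : 3 * k = 3 * k - 1 + 1),
    if_pos (by omega : k = k - 1 + 1), resid_mul3 k hk]

lemma hop_right_mul3 (p : ℝ) (k : ℕ) (hk : k ≠ 0) :
    hop p (3 * k) (3 * k + 1) = hop p k (k + 1) := by
  rw [hop, hop, if_pos rfl, if_pos rfl, if_neg (by omega : ¬(3 * k = 0)), if_neg hk,
    resid_mul3 k hk]

lemma hop_right_eq (p : ℝ) (k : ℕ) (hk : k ≠ 0) : hop p k (k + 1) = 1 - hop p k (k - 1) := by
  rw [hop, hop, if_pos rfl, if_neg hk, if_neg (by omega : ¬(k - 1 = k + 1)),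
    if_pos (by omega : k = k - 1 + 1)]
  split <;> ring

lemma delta_sum {m : ℕ} (a : Fin m) (c : ℂ) :
    (∑ j : Fin m, if j = a then c else 0) = c := by
  simp

lemma mulVec_row0 (p : ℝ) (l : ℕ) (v : Fin (3 ^ l + 1) → ℂ) (i : Fin (3 ^ l + 1))
    (hi : (i : ℕ) = 0) :
    (lapMatrix p l).mulVec v i =
      v ⟨0, by omega⟩ - v ⟨1, by have := pow3_pos l; omega⟩ := by
  have h1 : (1 : ℕ) < 3 ^ l + 1 := by have := pow3_pos l; omega
  have key : ∀ j : Fin (3 ^ l + 1), lapMatrix p l i j * v j =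
      (if j = (⟨0, by omega⟩ : Fin (3 ^ l + 1)) then v ⟨0, by omega⟩ else 0) +
      (if j = (⟨1, h1⟩ : Fin (3 ^ l + 1)) then -v ⟨1, h1⟩ else 0) := by
    intro j
    rcases j with ⟨jv, hj⟩
    simp only [lapMatrix, Matrix.of_apply, hi, Fin.mk.injEq, Fin.ext_iff]
    by_cases hj0 : jv = 0
    · subst hj0; norm_num
    · by_cases hj1 : jv = 1
      · subst hj1; norm_num
      · simp [hj0, hj1]
  rw [Matrix.mulVec, dotProduct]
  simp only [key, Finset.sum_add_distrib, delta_sum]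
  ring

lemma mulVec_rowN (p : ℝ) (l : ℕ) (v : Fin (3 ^ l + 1) → ℂ) (i : Fin (3 ^ l + 1))
    (hi : (i : ℕ) = 3 ^ l) :
    (lapMatrix p l).mulVec v i =
      v ⟨3 ^ l, by omega⟩ - v ⟨3 ^ l - 1, by omega⟩ := by
  have hN : 1 ≤ 3 ^ l := pow3_pos l
  have key : ∀ j : Fin (3 ^ l + 1), lapMatrix p l i j * v j =
      (if j = (⟨3 ^ l, by omega⟩ : Fin (3 ^ l + 1)) then v ⟨3 ^ l, by omega⟩ else 0) +
      (if j = (⟨3 ^ l - 1, by omega⟩ : Fin (3 ^ l + 1)) then -v ⟨3 ^ l - 1, by omega⟩ else 0) := by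
    intro j
    rcases j with ⟨jv, hj⟩
    simp only [lapMatrix, Matrix.of_apply, Fin.mk.injEq]
    rw [if_neg (show ¬(i : ℕ) = 0 by omega), if_pos hi]
    by_cases hj0 : jv = 3 ^ l
    · subst hj0
      rw [if_pos rfl, if_pos rfl, if_neg (show ¬3 ^ l = 3 ^ l - 1 by omega)]
      ring
    · by_cases hj1 : jv = 3 ^ l - 1
      · subst hj1
        rw [if_neg hj0, if_pos (show 3 ^ l - 1 + 1 = 3 ^ l by omega), if_neg hj0, if_pos rfl]
        ring
      · rw [if_neg hj0, if_neg (show ¬jv + 1 = 3 ^ l by omega), if_neg hj0, if_neg hj1]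
        ring
  rw [Matrix.mulVec, dotProduct]
  simp only [key, Finset.sum_add_distrib, delta_sum]
  ring

lemma mulVec_mid (p : ℝ) (l : ℕ) (v : Fin (3 ^ l + 1) → ℂ) (i : Fin (3 ^ l + 1))
    (hi0 : 0 < (i : ℕ)) (hiN : (i : ℕ) < 3 ^ l) :
    (lapMatrix p l).mulVec v i =
      v i - (hop p i ((i : ℕ) - 1) : ℂ) * v ⟨(i : ℕ) - 1, by omega⟩
        - (hop p i ((i : ℕ) + 1) : ℂ) * v ⟨(i : ℕ) + 1, by omega⟩ := by
  have key : ∀ j : Fin (3 ^ l + 1), lapMatrix p l i j * v j =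
      (if j = i then v i else 0) +
      (if j = (⟨(i : ℕ) - 1, by omega⟩ : Fin (3 ^ l + 1)) then
        -(hop p i ((i : ℕ) - 1) : ℂ) * v ⟨(i : ℕ) - 1, by omega⟩ else 0) +
      (if j = (⟨(i : ℕ) + 1, by omega⟩ : Fin (3 ^ l + 1)) then
        -(hop p i ((i : ℕ) + 1) : ℂ) * v ⟨(i : ℕ) + 1, by omega⟩ else 0) := by
    intro j
    rcases j with ⟨jv, hj⟩
    simp only [lapMatrix, Matrix.of_apply, Fin.mk.injEq, Fin.ext_iff,
      if_neg (by omega : ¬(i : ℕ) = 0), if_neg (by omega : ¬(i : ℕ) = 3 ^ l)]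
    by_cases hj0 : jv = (i : ℕ)
    · subst hj0
      rw [if_pos rfl, if_pos rfl, if_neg (by omega : ¬((i:ℕ) = (i:ℕ) - 1)),
        if_neg (by omega : ¬((i:ℕ) = (i:ℕ) + 1))]
      ring
    · by_cases hj1 : jv = (i : ℕ) - 1
      · subst hj1
        rw [if_neg (by omega : ¬((i:ℕ) - 1 = (i:ℕ))), if_pos (by omega : (i:ℕ) - 1 + 1 = (i:ℕ)),
          if_neg (by omega : ¬((i:ℕ) - 1 = (i:ℕ))), if_pos rfl,
          if_neg (by omega : ¬((i:ℕ) - 1 = (i:ℕ) + 1))]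
        ring
      · by_cases hj2 : jv = (i : ℕ) + 1
        · subst hj2
          rw [if_neg (by omega : ¬((i:ℕ) + 1 = (i:ℕ))), if_neg (by omega : ¬((i:ℕ) + 1 + 1 = (i:ℕ))),
            if_pos rfl, if_neg (by omega : ¬((i:ℕ) + 1 = (i:ℕ))),
            if_neg (by omega : ¬((i:ℕ) + 1 = (i:ℕ) - 1)), if_pos rfl]
          ring
        · rw [if_neg hj0, if_neg (by omega : ¬(jv + 1 = (i:ℕ))), if_neg hj2,
            if_neg (by omega : ¬(jv = (i:ℕ))), if_neg (by omega : ¬(jv = (i:ℕ) - 1)),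
            if_neg (by omega : ¬(jv = (i:ℕ) + 1))]
          ring
  rw [Matrix.mulVec, dotProduct]
  simp only [key, Finset.sum_add_distrib, delta_sum]
  ring

/-- The eigenvalue equation for `Δ^(l)_p` phrased for sequences on `ℕ`. -/
def EigFun (p : ℝ) (l : ℕ) (z : ℂ) (f : ℕ → ℂ) : Prop :=
  f 0 - f 1 = z * f 0 ∧
  f (3 ^ l) - f (3 ^ l - 1) = z * f (3 ^ l) ∧
  ∀ x : ℕ, 0 < x → x < 3 ^ l →
    f x - (hop p x (x - 1) : ℂ) * f (x - 1) - (hop p x (x + 1) : ℂ) * f (x + 1) = z * f x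

lemma matSpec_iff (p : ℝ) (l : ℕ) (z : ℂ) :
    z ∈ matSpec (lapMatrix p l) ↔
      ∃ f : ℕ → ℂ, (∃ x, x ≤ 3 ^ l ∧ f x ≠ 0) ∧ EigFun p l z f := by
  have hN := pow3_pos l
  constructor
  · rintro ⟨v, hv, hMv⟩
    have hrow : ∀ i, (lapMatrix p l).mulVec v i = z * v i := by
      intro i
      rw [hMv]; simp
    set f : ℕ → ℂ := fun x => if h : x < 3 ^ l + 1 then v ⟨x, h⟩ else 0 with hf
    have hfv : ∀ (x : ℕ) (h : x < 3 ^ l + 1), f x = v ⟨x, h⟩ := by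
      intro x h; simp only [hf]; rw [dif_pos h]
    refine ⟨f, ?_, ?_, ?_, ?_⟩
    · obtain ⟨j, hj⟩ := Function.ne_iff.mp hv
      refine ⟨(j : ℕ), by omega, ?_⟩
      rw [hfv _ j.isLt]
      simpa using hj
    · have e0 := hrow ⟨0, by omega⟩
      rw [mulVec_row0 p l v ⟨0, by omega⟩ rfl] at e0
      rw [hfv 0 (by omega), hfv 1 (by omega)]
      exact e0
    · have eN := hrow ⟨3 ^ l, by omega⟩
      rw [mulVec_rowN p l v ⟨3 ^ l, by omega⟩ rfl] at eN
      rw [hfv (3 ^ l) (by omega), hfv (3 ^ l - 1) (by omega)]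
      exact eN
    · intro x hx0 hxN
      have e := hrow ⟨x, by omega⟩
      rw [mulVec_mid p l v ⟨x, by omega⟩ hx0 hxN] at e
      rw [hfv x (by omega), hfv (x - 1) (by omega), hfv (x + 1) (by omega)]
      exact e
  · rintro ⟨f, ⟨x0, hx0, hfx0⟩, hE0, hEN, hEmid⟩
    refine ⟨fun j => f (j : ℕ), ?_, ?_⟩
    · intro hzero
      apply hfx0
      have := congrFun hzero ⟨x0, by omega⟩
      simpa using this
    · funext i
      by_cases hi0 : (i : ℕ) = 0
      · rw [mulVec_row0 p l _ i hi0]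
        simp only [Pi.smul_apply, smul_eq_mul, hi0]
        exact hE0
      · by_cases hiN : (i : ℕ) = 3 ^ l
        · rw [mulVec_rowN p l _ i hiN]
          simp only [Pi.smul_apply, smul_eq_mul, hiN]
          exact hEN
        · have hlt : (i : ℕ) < 3 ^ l := by have := i.isLt; omega
          rw [mulVec_mid p l _ i (by omega) hlt]
          simp only [Pi.smul_apply, smul_eq_mul]
          exact hEmid (i : ℕ) (by omega) hlt

section Alg
variable {p : ℝ} {z : ℂ}
variable (hD : (1 - z) ^ 2 - (p : ℂ) ^ 2 ≠ 0) (hp0 : (p : ℂ) ≠ 0) (hp1 : 1 - (p : ℂ) ≠ 0)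

lemma iff_of_key {X Y Z W C E : ℂ} (key : (X - Y) * C = (Z - W) * E) (hC : C ≠ 0) (hE : E ≠ 0) :
    X = Y ↔ Z = W := by
  rw [← sub_eq_zero, ← sub_eq_zero (a := Z)]
  constructor <;> intro h
  · have h2 : (Z - W) * E = 0 := by rw [← key, h, zero_mul]
    rcases mul_eq_zero.mp h2 with h' | h'
    · exact h'
    · exact absurd h' hE
  · have h2 : (X - Y) * C = 0 := by rw [key, h, zero_mul]
    rcases mul_eq_zero.mp h2 with h' | h'
    · exact h'
    · exact absurd h' hC

include hD hp0 hp1 in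
lemma cell_iff (a b u v : ℂ) :
    (u - (1 - (p : ℂ)) * a - (p : ℂ) * v = z * u ∧
      v - (p : ℂ) * u - (1 - (p : ℂ)) * b = z * v) ↔
    (u = ((1 - z) * (1 - (p : ℂ)) * a + (p : ℂ) * (1 - (p : ℂ)) * b) /
        ((1 - z) ^ 2 - (p : ℂ) ^ 2) ∧
      v = ((p : ℂ) * (1 - (p : ℂ)) * a + (1 - z) * (1 - (p : ℂ)) * b) /
        ((1 - z) ^ 2 - (p : ℂ) ^ 2)) := by
  constructor
  · rintro ⟨h1, h2⟩
    constructor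
    · rw [eq_div_iff hD]; linear_combination (1 - z) * h1 + (p : ℂ) * h2
    · rw [eq_div_iff hD]; linear_combination (p : ℂ) * h1 + (1 - z) * h2
  · rintro ⟨hu, hv⟩
    subst hu hv
    constructor <;> field_simp <;> ring

include hD hp0 hp1 in
lemma bdry_iff (f0 f1 f3 : ℂ)
    (h1 : f1 = ((1 - z) * (1 - (p : ℂ)) * f0 + (p : ℂ) * (1 - (p : ℂ)) * f3) /
      ((1 - z) ^ 2 - (p : ℂ) ^ 2)) :
    (f0 - f1 = z * f0) ↔ (f0 - f3 = Rlap p z * f0) := by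
  subst h1
  refine iff_of_key ?_ hD (mul_ne_zero hp0 hp1)
  rw [Rlap]
  field_simp
  ring

include hD hp0 hp1 in
lemma mid_iff (q a b c u v : ℂ)
    (hu : u = ((p : ℂ) * (1 - (p : ℂ)) * a + (1 - z) * (1 - (p : ℂ)) * b) /
      ((1 - z) ^ 2 - (p : ℂ) ^ 2))
    (hv : v = ((1 - z) * (1 - (p : ℂ)) * b + (p : ℂ) * (1 - (p : ℂ)) * c) /
      ((1 - z) ^ 2 - (p : ℂ) ^ 2)) :
    (b - q * u - (1 - q) * v = z * b) ↔
    (b - q * a - (1 - q) * c = Rlap p z * b) := by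
  subst hu hv
  refine iff_of_key ?_ hD (mul_ne_zero hp0 hp1)
  rw [Rlap]
  field_simp
  ring

end Alg

end SDProof

open SDProof

/-- **One-step spectral decimation for the Laplacians**: for `n ≥ 1` and `z ∉ {1−p, 1+p}`,
`z` is an eigenvalue of `Δ^(n)_p` iff `R_{Δ_p}(z)` is an eigenvalue of `Δ^(n−1)_p`. -/
theorem lapMatrix_spectral_decimation (p : ℝ) (hp : p ∈ Set.Ioo (0 : ℝ) 1)
    (n : ℕ) (hn : 1 ≤ n) (z : ℂ) (hz1 : z ≠ 1 - (p : ℂ)) (hz2 : z ≠ 1 + (p : ℂ)) :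
    z ∈ matSpec (lapMatrix p n) ↔ Rlap p z ∈ matSpec (lapMatrix p (n - 1)) := by
  obtain ⟨hpa, hpb⟩ := hp
  set m := n - 1 with hm
  have hnm : n = m + 1 := by omega
  have hpow : 3 ^ n = 3 * 3 ^ m := by rw [hnm, pow_succ]; ring
  have hm1 : 1 ≤ 3 ^ m := pow3_pos m
  have hp0 : (p : ℂ) ≠ 0 := by exact_mod_cast ne_of_gt hpa
  have hp1 : 1 - (p : ℂ) ≠ 0 := by
    rw [sub_ne_zero]
    have hne : (p : ℂ) ≠ 1 := by exact_mod_cast ne_of_lt hpb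
    exact hne.symm
  have hD : (1 - z) ^ 2 - (p : ℂ) ^ 2 ≠ 0 := by
    have e : (1 - z) ^ 2 - (p : ℂ) ^ 2 = (1 - (p : ℂ) - z) * (1 + (p : ℂ) - z) := by ring
    rw [e]
    exact mul_ne_zero (sub_ne_zero.mpr (Ne.symm hz1)) (sub_ne_zero.mpr (Ne.symm hz2))
  rw [matSpec_iff, matSpec_iff]
  constructor
  · rintro ⟨f, ⟨x0, hx0, hfx0⟩, hE0, hEN, hEmid⟩
    have hcell : ∀ k, k < 3 ^ m →
        f (3*k+1) = ((1 - z) * (1 - (p:ℂ)) * f (3*k) + (p:ℂ) * (1 - (p:ℂ)) * f (3*k+3)) /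
          ((1 - z) ^ 2 - (p:ℂ) ^ 2) ∧
        f (3*k+2) = ((p:ℂ) * (1 - (p:ℂ)) * f (3*k) + (1 - z) * (1 - (p:ℂ)) * f (3*k+3)) /
          ((1 - z) ^ 2 - (p:ℂ) ^ 2) := by
      intro k hk
      have h1 := hEmid (3*k+1) (by omega) (by omega)
      have h2 := hEmid (3*k+2) (by omega) (by omega)
      rw [hop_left_mod1 p (3*k+1) (by omega), hop_right_mod1 p (3*k+1) (by omega),
        show 3*k+1-1 = 3*k from by omega, show 3*k+1+1 = 3*k+2 from by omega] at h1
      rw [hop_left_mod2 p (3*k+2) (by omega), hop_right_mod2 p (3*k+2) (by omega),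
        show 3*k+2-1 = 3*k+1 from by omega] at h2
      push_cast at h1 h2
      exact (cell_iff hD hp0 hp1 (f (3*k)) (f (3*k+3)) (f (3*k+1)) (f (3*k+2))).mp ⟨h1, h2⟩
    refine ⟨fun k => f (3*k), ?_, ?_, ?_, ?_⟩
    · by_contra hcon
      push_neg at hcon
      have hcon' : ∀ x, x ≤ 3 ^ m → f (3*x) = 0 := fun x hx => hcon x hx
      apply hfx0
      have hmod : x0 % 3 = 0 ∨ x0 % 3 = 1 ∨ x0 % 3 = 2 := by omega
      set k := x0 / 3 with hkdef
      rcases hmod with h|h|h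
      · rw [show x0 = 3*k from by omega]
        exact hcon' k (by omega)
      · rw [show x0 = 3*k+1 from by omega, (hcell k (by omega)).1,
          hcon' k (by omega), show 3*k+3 = 3*(k+1) from by omega, hcon' (k+1) (by omega)]
        simp
      · rw [show x0 = 3*k+2 from by omega, (hcell k (by omega)).2,
          hcon' k (by omega), show 3*k+3 = 3*(k+1) from by omega, hcon' (k+1) (by omega)]
        simp
    · show f (3*0) - f (3*1) = Rlap p z * f (3*0)
      have h1 := (hcell 0 (by omega)).1
      norm_num at h1 ⊢
      exact (bdry_iff hD hp0 hp1 (f 0) (f 1) (f 3) h1).mp hE0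
    · show f (3*3^m) - f (3*(3^m - 1)) = Rlap p z * f (3*3^m)
      have h2 := (hcell (3^m - 1) (by omega)).2
      rw [show 3*(3^m-1)+2 = 3^n - 1 from by omega, show 3*(3^m-1)+3 = 3^n from by omega] at h2
      have h1' : f (3^n - 1) = ((1 - z) * (1 - (p:ℂ)) * f (3^n) +
          (p:ℂ) * (1 - (p:ℂ)) * f (3*(3^m-1))) / ((1-z)^2 - (p:ℂ)^2) := by
        rw [h2]; ring
      have hres := (bdry_iff hD hp0 hp1 (f (3^n)) (f (3^n - 1)) (f (3*(3^m-1))) h1').mp hEN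
      rw [show 3*3^m = 3^n from hpow.symm]
      exact hres
    · intro k hk0 hkm
      show f (3*k) - (hop p k (k-1) : ℂ) * f (3*(k-1)) - (hop p k (k+1) : ℂ) * f (3*(k+1))
        = Rlap p z * f (3*k)
      have hu := (hcell (k-1) (by omega)).2
      rw [show 3*(k-1)+2 = 3*k - 1 from by omega, show 3*(k-1)+3 = 3*k from by omega] at hu
      have hv := (hcell k (by omega)).1
      rw [show 3*k+3 = 3*(k+1) from by omega] at hv
      have hEq := hEmid (3*k) (by omega) (by omega)
      rw [hop_left_mul3 p k (by omega), hop_right_mul3 p k (by omega),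
        hop_right_eq p k (by omega)] at hEq
      push_cast at hEq
      have hres := (mid_iff hD hp0 hp1 ((hop p k (k-1) : ℝ) : ℂ) (f (3*(k-1))) (f (3*k))
        (f (3*(k+1))) (f (3*k-1)) (f (3*k+1)) hu hv).mp hEq
      rw [hop_right_eq p k (by omega)]
      push_cast
      exact hres
  · rintro ⟨g, ⟨k0, hk0, hg0⟩, hB0, hBN, hBmid⟩
    set f : ℕ → ℂ := fun x =>
      if x % 3 = 0 then g (x/3)
      else if x % 3 = 1 then
        ((1 - z) * (1 - (p:ℂ)) * g (x/3) + (p:ℂ) * (1 - (p:ℂ)) * g (x/3+1)) /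
          ((1-z)^2 - (p:ℂ)^2)
      else ((p:ℂ) * (1 - (p:ℂ)) * g (x/3) + (1 - z) * (1 - (p:ℂ)) * g (x/3+1)) /
          ((1-z)^2 - (p:ℂ)^2) with hfdef
    have hf0 : ∀ k, f (3*k) = g k := by
      intro k
      simp only [hfdef]
      rw [if_pos (by omega : 3*k % 3 = 0)]
      congr 1
      omega
    have hf1 : ∀ k, f (3*k+1) = ((1 - z) * (1 - (p:ℂ)) * g k + (p:ℂ) * (1 - (p:ℂ)) * g (k+1)) /
        ((1-z)^2 - (p:ℂ)^2) := by
      intro k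
      simp only [hfdef]
      rw [if_neg (by omega : ¬(3*k+1) % 3 = 0), if_pos (by omega : (3*k+1) % 3 = 1),
        show (3*k+1)/3 = k from by omega]
    have hf2 : ∀ k, f (3*k+2) = ((p:ℂ) * (1 - (p:ℂ)) * g k + (1 - z) * (1 - (p:ℂ)) * g (k+1)) /
        ((1-z)^2 - (p:ℂ)^2) := by
      intro k
      simp only [hfdef]
      rw [if_neg (by omega : ¬(3*k+2) % 3 = 0), if_neg (by omega : ¬(3*k+2) % 3 = 1),
        show (3*k+2)/3 = k from by omega]
    refine ⟨f, ⟨3*k0, by omega, by rw [hf0]; exact hg0⟩, ?_, ?_, ?_⟩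
    · have e0 : f 0 = g 0 := by
        have := hf0 0
        norm_num at this
        exact this
      have e1 := hf1 0
      norm_num at e1
      rw [e0, e1]
      exact (bdry_iff hD hp0 hp1 (g 0) _ (g 1) rfl).mpr hB0
    · have eN : f (3^n) = g (3^m) := by rw [hpow, hf0]
      have eN1 := hf2 (3^m - 1)
      rw [show 3*(3^m-1)+2 = 3^n - 1 from by omega, show 3^m - 1 + 1 = 3^m from by omega] at eN1
      rw [eN, eN1]
      refine (bdry_iff hD hp0 hp1 (g (3^m)) _ (g (3^m - 1)) ?_).mpr hBN
      ring
    · intro x hx0 hxN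
      have hx3 : x % 3 = 0 ∨ x % 3 = 1 ∨ x % 3 = 2 := by omega
      rcases hx3 with h|h|h
      · obtain ⟨k, rfl⟩ : ∃ k, x = 3*k := ⟨x/3, by omega⟩
        have hk0' : k ≠ 0 := by omega
        have hkm : k < 3^m := by omega
        have hu := hf2 (k-1)
        rw [show 3*(k-1)+2 = 3*k-1 from by omega, show k - 1 + 1 = k from by omega] at hu
        have hv := hf1 k
        have hmid := hBmid k (by omega) hkm
        rw [hop_right_eq p k hk0'] at hmid
        push_cast at hmid
        have hres := (mid_iff hD hp0 hp1 ((hop p k (k-1) : ℝ) : ℂ) (g (k-1)) (g k) (g (k+1))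
          (f (3*k-1)) (f (3*k+1)) hu hv).mpr hmid
        rw [hop_left_mul3 p k hk0', hop_right_mul3 p k hk0', hop_right_eq p k hk0', hf0 k]
        push_cast
        exact hres
      · obtain ⟨k, rfl⟩ : ∃ k, x = 3*k+1 := ⟨x/3, by omega⟩
        have hpair := (cell_iff hD hp0 hp1 (g k) (g (k+1)) (f (3*k+1)) (f (3*k+2))).mpr
          ⟨hf1 k, hf2 k⟩
        rw [hop_left_mod1 p (3*k+1) (by omega), hop_right_mod1 p (3*k+1) (by omega),
          show 3*k+1-1 = 3*k from by omega, show 3*k+1+1 = 3*k+2 from by omega, hf0 k]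
        push_cast
        exact hpair.1
      · obtain ⟨k, rfl⟩ : ∃ k, x = 3*k+2 := ⟨x/3, by omega⟩
        have hpair := (cell_iff hD hp0 hp1 (g k) (g (k+1)) (f (3*k+1)) (f (3*k+2))).mpr
          ⟨hf1 k, hf2 k⟩
        rw [hop_left_mod2 p (3*k+2) (by omega), hop_right_mod2 p (3*k+2) (by omega),
          show 3*k+2-1 = 3*k+1 from by omega, show 3*k+2+1 = 3*(k+1) from by omega, hf0 (k+1)]
        push_cast
        exact hpair.2
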